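/- arXiv:2605.29547 — 2 statements merged into one kernel-verified Lean document; each statement's English description precedes it below -/
import Mathlib

section
/- Let Y₁, …, Y_k be i.i.d. real random variables on a probability space with |Yᵢ| ≤ L almost surely for some L > 0, and let ε > 0. Define μ = E[Y₁], σ² = Var(Y₁), ρ = σ²/(μ² + σ² + ε), and the empirical estimates μ̂ = (1/k)∑ᵢ Yᵢ, σ̂² = (1/k)∑ᵢ (Yᵢ − μ̂)², ρ̂_k = σ̂²/(μ̂² + σ̂² + ε). Then for every Δ > 0, P( |ρ̂_k − ρ| ≥ Δ ) ≤ 6 exp( −kΔ² / (32 M² L⁴ (4L² + 1)) ), where M = √(ε² + L⁴)/ε². -/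
/-!
With `m₂ = E[Y²]` the LGI score is `1 - (μ² + ε) / (m₂ + ε)`, which is Lipschitz in `(μ, m₂)` while
`|μ| ≤ L` and `m₂ ≥ 0`: `|ρ̂ - ρ| ≤ (|m̂₂ - m₂| + 2L |μ̂ - μ|) / ε`. So `|ρ̂ - ρ| ≥ Δ` forces the
empirical second moment to be off by `εΔ/2` or the empirical mean by `εΔ/(4L)`. Hoeffding's
inequality, for `Y²` in `[0, L²]` and for `Y` in `[-L, L]`, bounds each event by
`2 exp(-kε²Δ²/(32L⁴))`, and the stated bound is weaker because `εM ≥ 1`.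
-/

open MeasureTheory ProbabilityTheory Finset

noncomputable def lgiScore (ε μ σsq : ℝ) : ℝ := σsq / (μ ^ 2 + σsq + ε)

lemma abs_lgiScore_sub_le {ε L u v μ m : ℝ} (hε : 0 < ε) (hv : 0 ≤ v) (hm : μ ^ 2 ≤ m)
    (hu : |u| ≤ L) (hμ : |μ| ≤ L) :
    |lgiScore ε u (v - u ^ 2) - lgiScore ε μ (m - μ ^ 2)| ≤ (|v - m| + 2 * L * |u - μ|) / ε := by
  have hL : 0 ≤ L := (abs_nonneg u).trans hu
  have hvε : ε ≤ v + ε := by linarith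
  have hmε : μ ^ 2 + ε ≤ m + ε := by linarith
  have hμε : 0 < μ ^ 2 + ε := by positivity
  have hmpos : 0 < m + ε := hμε.trans_le hmε
  have hdiff : lgiScore ε u (v - u ^ 2) - lgiScore ε μ (m - μ ^ 2)
      = (μ ^ 2 + ε) / (m + ε) * ((v - m) / (v + ε)) + (μ - u) * (μ + u) / (v + ε) := by
    have hv0 : v + ε ≠ 0 := by positivity
    have hm0 : m + ε ≠ 0 := hmpos.ne'
    unfold lgiScore
    rw [show u ^ 2 + (v - u ^ 2) + ε = v + ε by ring, show μ ^ 2 + (m - μ ^ 2) + ε = m + ε by ring]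
    field_simp
    ring
  have hfirst : |(μ ^ 2 + ε) / (m + ε) * ((v - m) / (v + ε))| ≤ |v - m| / ε := by
    rw [abs_mul, abs_div, abs_div, abs_of_pos hμε, abs_of_pos hmpos,
      abs_of_pos (hε.trans_le hvε)]
    calc (μ ^ 2 + ε) / (m + ε) * (|v - m| / (v + ε)) ≤ 1 * (|v - m| / ε) := by
          gcongr
          exact div_le_one_of_le₀ hmε hmpos.le
      _ = |v - m| / ε := one_mul _
  have hsecond : |(μ - u) * (μ + u) / (v + ε)| ≤ 2 * L * |u - μ| / ε := by
    rw [abs_div, abs_mul, abs_sub_comm, abs_of_pos (hε.trans_le hvε)]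
    have hsum : |μ + u| ≤ 2 * L := (abs_add_le _ _).trans (by linarith)
    calc |u - μ| * |μ + u| / (v + ε) ≤ |u - μ| * (2 * L) / ε := by gcongr
      _ = 2 * L * |u - μ| / ε := by ring
  calc |lgiScore ε u (v - u ^ 2) - lgiScore ε μ (m - μ ^ 2)|
      ≤ |v - m| / ε + 2 * L * |u - μ| / ε :=
        hdiff ▸ (abs_add_le _ _).trans (add_le_add hfirst hsecond)
    _ = (|v - m| + 2 * L * |u - μ|) / ε := by ring

lemma lgiScore_deviation_split {ε L Δ u v μ m : ℝ} (hε : 0 < ε) (hL : 0 < L) (hv : 0 ≤ v)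
    (hm : μ ^ 2 ≤ m) (hu : |u| ≤ L) (hμ : |μ| ≤ L)
    (hΔ : Δ ≤ |lgiScore ε u (v - u ^ 2) - lgiScore ε μ (m - μ ^ 2)|) :
    ε * Δ / 2 ≤ |v - m| ∨ ε * Δ / (4 * L) ≤ |u - μ| := by
  have hsum : ε * Δ ≤ |v - m| + 2 * L * |u - μ| :=
    (le_div_iff₀' hε).1 (hΔ.trans (abs_lgiScore_sub_le hε hv hm hu hμ))
  rcases le_or_gt (ε * Δ / 2) |v - m| with h | h
  · exact Or.inl h
  · refine Or.inr ((div_le_iff₀ (by positivity : (0 : ℝ) < 4 * L)).2 ?_)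
    linarith

lemma mean_sq_sub_mean_eq {ι : Type*} [Fintype ι] [Nonempty ι] (x : ι → ℝ) :
    (1 / Fintype.card ι : ℝ) * ∑ i, (x i - (1 / Fintype.card ι : ℝ) * ∑ j, x j) ^ 2
      = (1 / Fintype.card ι : ℝ) * ∑ i, x i ^ 2 - ((1 / Fintype.card ι : ℝ) * ∑ i, x i) ^ 2 := by
  have hn : (Fintype.card ι : ℝ) ≠ 0 := by positivity
  simp only [sub_sq, sum_add_distrib, sum_sub_distrib, ← sum_mul, ← mul_sum, sum_const, card_univ,
    nsmul_eq_mul]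
  field_simp
  ring

lemma abs_mean_le {ι : Type*} [Fintype ι] {x : ι → ℝ} {L : ℝ} (hL : 0 ≤ L) (hx : ∀ i, |x i| ≤ L) :
    |(1 / Fintype.card ι : ℝ) * ∑ i, x i| ≤ L := by
  rw [abs_mul, abs_of_nonneg (by positivity)]
  calc (1 / Fintype.card ι : ℝ) * |∑ i, x i| ≤ (1 / Fintype.card ι : ℝ) * (Fintype.card ι * L) := by
        gcongr
        exact (abs_sum_le_sum_abs _ _).trans ((sum_le_sum fun i _ => hx i).trans_eq (by simp))
    _ ≤ L := by
        rw [← mul_assoc, one_div]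
        exact mul_le_of_le_one_left hL inv_mul_le_one

section Probability

variable {Ω ι : Type*} [MeasurableSpace Ω] {P : Measure Ω} [IsProbabilityMeasure P] [Fintype ι]

lemma measureReal_sum_sub_ge_le {Z : ι → Ω → ℝ} (hindep : iIndepFun Z P)
    (hmeas : ∀ i, AEMeasurable (Z i) P) {a b m : ℝ} (hZ : ∀ i, ∀ᵐ ω ∂P, Z i ω ∈ Set.Icc a b)
    (hm : ∀ i, P[Z i] = m) {t : ℝ} (ht : 0 ≤ t) :
    P.real {ω | t ≤ ∑ i, (Z i ω - m)} ≤
      Real.exp (-2 * t ^ 2 / (Fintype.card ι * (b - a) ^ 2)) := by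
  have hsubG : ∀ i ∈ (univ : Finset ι),
      HasSubgaussianMGF (fun ω => Z i ω - m) ((‖b - a‖₊ / 2) ^ 2) P := fun i _ =>
    hm i ▸ hasSubgaussianMGF_of_mem_Icc (hmeas i) (hZ i)
  have hindep' : iIndepFun (fun i ω => Z i ω - m) P :=
    hindep.comp (fun _ x => x - m) fun _ => measurable_id.sub_const m
  refine (HasSubgaussianMGF.measure_sum_ge_le_of_iIndepFun hindep' hsubG ht).trans_eq ?_
  simp only [sum_const, card_univ, nsmul_eq_mul, NNReal.coe_mul, NNReal.coe_natCast,
    NNReal.coe_pow, NNReal.coe_div, coe_nnnorm, Real.norm_eq_abs, NNReal.coe_ofNat, div_pow, sq_abs]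
  generalize (b - a) ^ 2 = d
  ring_nf

lemma measureReal_abs_mean_sub_ge_le [Nonempty ι] {Z : ι → Ω → ℝ} (hindep : iIndepFun Z P)
    (hmeas : ∀ i, AEMeasurable (Z i) P) {a b m : ℝ} (hZ : ∀ i, ∀ᵐ ω ∂P, Z i ω ∈ Set.Icc a b)
    (hm : ∀ i, P[Z i] = m) {t : ℝ} (ht : 0 ≤ t) :
    P.real {ω | t ≤ |(1 / Fintype.card ι : ℝ) * ∑ i, Z i ω - m|} ≤
      2 * Real.exp (-2 * Fintype.card ι * t ^ 2 / (b - a) ^ 2) := by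
  set n : ℝ := (Fintype.card ι : ℝ) with hn_def
  have hn : 0 < n := by positivity
  have hupper : P.real {ω | n * t ≤ ∑ i, (Z i ω - m)} ≤
      Real.exp (-2 * (n * t) ^ 2 / (n * (b - a) ^ 2)) :=
    measureReal_sum_sub_ge_le hindep hmeas hZ hm (by positivity)
  have hlower : P.real {ω | n * t ≤ ∑ i, (-Z i ω - -m)} ≤
      Real.exp (-2 * (n * t) ^ 2 / (n * (-a - -b) ^ 2)) :=
    measureReal_sum_sub_ge_le (hindep.comp (fun _ x => -x) fun _ => measurable_neg)
      (fun i => (hmeas i).neg)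
      (fun i => by filter_upwards [hZ i] with ω hω using ⟨neg_le_neg hω.2, neg_le_neg hω.1⟩)
      (fun i => by simp only [Function.comp_def, integral_neg, hm i]) (by positivity)
  have hexp : -2 * (n * t) ^ 2 / (n * (b - a) ^ 2) = -2 * n * t ^ 2 / (b - a) ^ 2 := by
    field_simp
  rw [hexp] at hupper
  rw [neg_sub_neg, hexp] at hlower
  have hsplit : {ω | t ≤ |(1 / n) * ∑ i, Z i ω - m|} ⊆
      {ω | n * t ≤ ∑ i, (Z i ω - m)} ∪ {ω | n * t ≤ ∑ i, (-Z i ω - -m)} := by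
    intro ω hω
    have hmean : (1 / n) * ∑ i, Z i ω - m = (∑ i, (Z i ω - m)) / n := by
      rw [sum_sub_distrib, sum_const, card_univ, nsmul_eq_mul, ← hn_def]
      field_simp
    have hneg : ∑ i, (-Z i ω - -m) = -∑ i, (Z i ω - m) := by
      rw [← sum_neg_distrib]
      exact sum_congr rfl fun i _ => by ring
    simp only [Set.mem_ofPred_eq, hmean, abs_div, abs_of_pos hn, le_div_iff₀ hn] at hω
    rw [mul_comm] at hω
    simpa only [Set.mem_union, Set.mem_ofPred_eq, hneg] using le_abs.1 hω
  calc P.real {ω | t ≤ |(1 / n) * ∑ i, Z i ω - m|}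
      ≤ P.real {ω | n * t ≤ ∑ i, (Z i ω - m)} + P.real {ω | n * t ≤ ∑ i, (-Z i ω - -m)} :=
        (measureReal_mono hsplit).trans (measureReal_union_le _ _)
    _ ≤ 2 * Real.exp (-2 * n * t ^ 2 / (b - a) ^ 2) := by linarith

lemma sq_integral_le_integral_sq {X : Ω → ℝ} (hX : MemLp X 2 P) : P[X] ^ 2 ≤ ∫ ω, X ω ^ 2 ∂P := by
  have hvar := variance_nonneg X P
  rw [variance_eq_sub hX, sub_nonneg] at hvar
  exact hvar

theorem measureReal_lgiScore_deviation_ge_le [Nonempty ι] {Y : ι → Ω → ℝ} (hindep : iIndepFun Y P)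
    (hmeas : ∀ i, AEMeasurable (Y i) P) {L ε Δ μ m₂ : ℝ} (hL : 0 < L)
    (hbd : ∀ i, ∀ᵐ ω ∂P, |Y i ω| ≤ L) (hμ : ∀ i, P[Y i] = μ)
    (hm₂ : ∀ i, ∫ ω, Y i ω ^ 2 ∂P = m₂) (hε : 0 < ε) (hΔ : 0 ≤ Δ) :
    P.real {ω | Δ ≤ |lgiScore ε ((1 / Fintype.card ι : ℝ) * ∑ i, Y i ω)
        ((1 / Fintype.card ι : ℝ) * ∑ i, (Y i ω - (1 / Fintype.card ι : ℝ) * ∑ j, Y j ω) ^ 2)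
        - lgiScore ε μ (m₂ - μ ^ 2)|} ≤
      4 * Real.exp (-(Fintype.card ι * ε ^ 2 * Δ ^ 2) / (32 * L ^ 4)) := by
  set n : ℝ := (Fintype.card ι : ℝ)
  set μhat : Ω → ℝ := fun ω => (1 / n) * ∑ i, Y i ω
  set m₂hat : Ω → ℝ := fun ω => (1 / n) * ∑ i, Y i ω ^ 2
  obtain ⟨i₀⟩ := ‹Nonempty ι›
  have hμL : |μ| ≤ L := by
    simpa [hμ i₀] using norm_integral_le_of_norm_le_const (μ := P) (f := Y i₀) (hbd i₀)
  have hμm₂ : μ ^ 2 ≤ m₂ := hμ i₀ ▸ hm₂ i₀ ▸ sq_integral_le_integral_sq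
    (MemLp.of_bound (hmeas i₀).aestronglyMeasurable L (by simpa using hbd i₀))
  have hsplit : ({ω | Δ ≤ |lgiScore ε (μhat ω) ((1 / n) * ∑ i, (Y i ω - μhat ω) ^ 2)
        - lgiScore ε μ (m₂ - μ ^ 2)|} : Set Ω) ≤ᵐ[P]
      ({ω | ε * Δ / 2 ≤ |m₂hat ω - m₂|} ∪ {ω | ε * Δ / (4 * L) ≤ |μhat ω - μ|} : Set Ω) := by
    filter_upwards [ae_all_iff.2 hbd] with ω hω hΔω
    change Δ ≤ |lgiScore ε (μhat ω) ((1 / n) * ∑ i, (Y i ω - μhat ω) ^ 2) - _| at hΔω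
    rw [mean_sq_sub_mean_eq] at hΔω
    exact lgiScore_deviation_split hε hL (by positivity) hμm₂ (abs_mean_le hL.le hω) hμL hΔω
  have hY : ∀ i, ∀ᵐ ω ∂P, Y i ω ∈ Set.Icc (-L) L := fun i => (hbd i).mono fun _ => abs_le.1
  have hY2 : ∀ i, ∀ᵐ ω ∂P, Y i ω ^ 2 ∈ Set.Icc 0 (L ^ 2) := fun i => (hbd i).mono fun ω h =>
    ⟨sq_nonneg _, sq_le_sq' (abs_le.1 h).1 (abs_le.1 h).2⟩
  have hsq := measureReal_abs_mean_sub_ge_le (Z := fun i ω => Y i ω ^ 2)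
    (hindep.comp (fun _ x => x ^ 2) fun _ => measurable_id.pow_const 2)
    (fun i => (hmeas i).pow_const 2) hY2 hm₂ (by positivity : 0 ≤ ε * Δ / 2)
  have hlin := measureReal_abs_mean_sub_ge_le hindep hmeas hY hμ
    (by positivity : 0 ≤ ε * Δ / (4 * L))
  set e : ℝ := -(n * ε ^ 2 * Δ ^ 2) / (32 * L ^ 4)
  have he : e ≤ 0 := div_nonpos_of_nonpos_of_nonneg (neg_nonpos.2 (by positivity)) (by positivity)
  have hsq_exp : -2 * n * (ε * Δ / 2) ^ 2 / (L ^ 2 - 0) ^ 2 = 16 * e := by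
    simp only [e]; field_simp; ring
  have hlin_exp : -2 * n * (ε * Δ / (4 * L)) ^ 2 / (L - -L) ^ 2 = e := by
    simp only [e]; field_simp; ring
  rw [hsq_exp] at hsq
  rw [hlin_exp] at hlin
  calc _ ≤ P.real ({ω | ε * Δ / 2 ≤ |m₂hat ω - m₂|} ∪ {ω | ε * Δ / (4 * L) ≤ |μhat ω - μ|}) :=
        ENNReal.toReal_mono (measure_ne_top _ _) (measure_mono_ae hsplit)
    _ ≤ 2 * Real.exp (16 * e) + 2 * Real.exp e :=
        (measureReal_union_le _ _).trans (add_le_add hsq hlin)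
    _ ≤ 4 * Real.exp e := by
        have := Real.exp_le_exp.2 (by linarith : 16 * e ≤ e)
        linarith

end Probability

lemma lgi_exponent_le {k ε L Δ : ℝ} (hk : 0 ≤ k) (hε : 0 < ε) (hL : 0 < L) :
    -(k * ε ^ 2 * Δ ^ 2) / (32 * L ^ 4) ≤
      -(k * Δ ^ 2) / (32 * (Real.sqrt (ε ^ 2 + L ^ 4) / ε ^ 2) ^ 2 * L ^ 4 * (4 * L ^ 2 + 1)) := by
  rw [div_pow, Real.sq_sqrt (by positivity)]
  set M₂ := (ε ^ 2 + L ^ 4) / (ε ^ 2) ^ 2 with hM₂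
  have hgrowth : 1 ≤ ε ^ 2 * (M₂ * (4 * L ^ 2 + 1)) := by
    rw [← mul_assoc, show ε ^ 2 * M₂ = 1 + L ^ 4 / ε ^ 2 by rw [hM₂]; field_simp]
    nlinarith [show 0 ≤ L ^ 4 / ε ^ 2 by positivity, sq_nonneg L]
  calc -(k * ε ^ 2 * Δ ^ 2) / (32 * L ^ 4) = -(k * Δ ^ 2 / (32 * L ^ 4) * ε ^ 2) := by ring
    _ ≤ -(k * Δ ^ 2 / (32 * L ^ 4) / (M₂ * (4 * L ^ 2 + 1))) := by
        rw [neg_le_neg_iff]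
        have hc : 0 ≤ k * Δ ^ 2 / (32 * L ^ 4) := by positivity
        exact div_le_of_le_mul₀ (by positivity) (by positivity)
          (by linarith [mul_le_mul_of_nonneg_left hgrowth hc])
    _ = _ := by
        rw [div_div, neg_div]
        ring

theorem lgi_concentration_general
    {Ω : Type*} [MeasurableSpace Ω] (P : Measure Ω) [IsProbabilityMeasure P]
    (k : ℕ) (hk : 0 < k) (Y : Fin k → Ω → ℝ)
    (hindep : iIndepFun Y P)
    (hident : ∀ i, IdentDistrib (Y i) (Y ⟨0, hk⟩) P P)
    (L : ℝ) (hL : 0 < L) (hbound : ∀ i, ∀ᵐ ω ∂P, |Y i ω| ≤ L)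
    (ε : ℝ) (hε : 0 < ε) (Δ : ℝ) (hΔ : 0 < Δ) :
    let μ : ℝ := ∫ ω, Y ⟨0, hk⟩ ω ∂P
    let σsq : ℝ := (∫ ω, (Y ⟨0, hk⟩ ω) ^ 2 ∂P) - μ ^ 2
    let ρ : ℝ := σsq / (μ ^ 2 + σsq + ε)
    let μhat : Ω → ℝ := fun ω => (1 / k) * ∑ i, Y i ω
    let σsqhat : Ω → ℝ := fun ω => (1 / k) * ∑ i, (Y i ω - μhat ω) ^ 2
    let ρhat : Ω → ℝ := fun ω => σsqhat ω / ((μhat ω) ^ 2 + σsqhat ω + ε)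
    let M : ℝ := Real.sqrt (ε ^ 2 + L ^ 4) / ε ^ 2
    P {ω | Δ ≤ |ρhat ω - ρ|} ≤
      ENNReal.ofReal (6 * Real.exp (-(k * Δ ^ 2) /
        (32 * M ^ 2 * L ^ 4 * (4 * L ^ 2 + 1)))) := by
  intro μ σsq ρ μhat σsqhat ρhat M
  have : Nonempty (Fin k) := ⟨⟨0, hk⟩⟩
  have hdev := measureReal_lgiScore_deviation_ge_le hindep (fun i => (hident i).aemeasurable_fst)
    hL hbound (fun i => (hident i).integral_eq)
    (fun i => ((hident i).comp (measurable_id.pow_const 2)).integral_eq) hε hΔ.le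
  rw [Fintype.card_fin] at hdev
  rw [← ofReal_measureReal]
  refine ENNReal.ofReal_le_ofReal (hdev.trans ?_)
  have := Real.exp_le_exp.2 (lgi_exponent_le (Nat.cast_nonneg k) hε hL (Δ := Δ))
  linarith [Real.exp_pos (-(k * ε ^ 2 * Δ ^ 2) / (32 * L ^ 4))]

/-- Concentration of the empirical LGI score `ρ̂_k` around the
population LGI score `ρ` for i.i.d. random variables bounded by `L`. -/
theorem lgi_concentration
    {Ω : Type*} [MeasurableSpace Ω] (P : Measure Ω) [IsProbabilityMeasure P]
    (k : ℕ) (hk : 0 < k) (Y : Fin k → Ω → ℝ) (hmeas : ∀ i, Measurable (Y i))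
    (hindep : iIndepFun Y P)
    (hident : ∀ i, IdentDistrib (Y i) (Y ⟨0, hk⟩) P P)
    (L : ℝ) (hL : 0 < L) (hbound : ∀ i, ∀ᵐ ω ∂P, |Y i ω| ≤ L)
    (ε : ℝ) (hε : 0 < ε) (Δ : ℝ) (hΔ : 0 < Δ) :
    let μ : ℝ := ∫ ω, Y ⟨0, hk⟩ ω ∂P
    let σsq : ℝ := (∫ ω, (Y ⟨0, hk⟩ ω) ^ 2 ∂P) - μ ^ 2
    let ρ : ℝ := σsq / (μ ^ 2 + σsq + ε)
    let μhat : Ω → ℝ := fun ω => (1 / k) * ∑ i, Y i ω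
    let σsqhat : Ω → ℝ := fun ω => (1 / k) * ∑ i, (Y i ω - μhat ω) ^ 2
    let ρhat : Ω → ℝ := fun ω => σsqhat ω / ((μhat ω) ^ 2 + σsqhat ω + ε)
    let M : ℝ := Real.sqrt (ε ^ 2 + L ^ 4) / ε ^ 2
    P {ω | Δ ≤ |ρhat ω - ρ|} ≤
      ENNReal.ofReal (6 * Real.exp (-(k * Δ ^ 2) /
        (32 * M ^ 2 * L ^ 4 * (4 * L ^ 2 + 1)))) :=
  lgi_concentration_general P k hk Y hindep hident L hL hbound ε hε Δ hΔ
end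

section
/- Let k ≥ 1, ε > 0, β ≥ 0, L > 0, b ≥ 1, and let a₁, …, a_k and b₁, …, b_k be real numbers such that |aᵢ| ≤ β, |bᵢ| ≤ β, and |aᵢ − bᵢ| ≤ 2L/b for all i. Define ρ(a) = Var(a)/((1/k)∑ᵢ aᵢ² + ε) with Var(a) = (1/k)∑ᵢ (aᵢ − ā)², ā = (1/k)∑ᵢ aᵢ, and likewise ρ(b). Then |ρ(a) − ρ(b)| ≤ (4√5 · Lβ/(bε)) · √(1 + β⁴/ε²); in particular, for fixed k, ε, β, L the LGI scores computed on two datasets differing in one of b samples differ by O(1/b). -/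
open Finset

/-- Averaging a family bounded by `C` gives a value bounded by `C`. -/
lemma lgi_mean_abs_le (k : ℕ) (hk : 1 ≤ k) (f : Fin k → ℝ) (C : ℝ)
    (h : ∀ i, |f i| ≤ C) : |((1 : ℝ) / k) * ∑ i, f i| ≤ C := by
  have hk0 : (0 : ℝ) < k := by exact_mod_cast Nat.lt_of_lt_of_le Nat.zero_lt_one hk
  have h1 : |∑ i, f i| ≤ (k : ℝ) * C := by
    calc |∑ i, f i| ≤ ∑ i, |f i| := Finset.abs_sum_le_sum_abs _ _
    _ ≤ ∑ _i : Fin k, C := Finset.sum_le_sum fun i _ => h i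
    _ = (k : ℝ) * C := by simp [mul_comm]
  calc |((1 : ℝ) / k) * ∑ i, f i| = (1 / k) * |∑ i, f i| := by
        rw [abs_mul, abs_of_nonneg (by positivity)]
    _ ≤ (1 / k) * ((k : ℝ) * C) := by
        apply mul_le_mul_of_nonneg_left h1; positivity
    _ = C := by field_simp

/-- Key scalar inequality: `2 + x ≤ √5 · √(1 + x²)` for `x ≥ 0`. -/
lemma lgi_scalar (x : ℝ) (hx : 0 ≤ x) :
    2 + x ≤ Real.sqrt 5 * Real.sqrt (1 + x ^ 2) := by
  rw [← Real.sqrt_mul (by norm_num)]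
  rw [show (2 + x) = Real.sqrt ((2 + x) ^ 2) from (Real.sqrt_sq (by linarith)).symm]
  apply Real.sqrt_le_sqrt
  nlinarith [sq_nonneg (2 * x - 1)]

/-- Algebraic decomposition of the difference of two ratios. -/
lemma lgi_decomp (Va Va' EA EB ε : ℝ) (h1 : EA + ε ≠ 0) (h2 : EB + ε ≠ 0) :
    Va / (EA + ε) - Va' / (EB + ε)
      = (Va - Va') / (EA + ε) + Va' * (EB - EA) / ((EA + ε) * (EB + ε)) := by
  field_simp
  ring

/-- One-sample stability of the LGI score: if two families of probes
are bounded by `β` and differ componentwise by at most `2L/b`, then the LGI scores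
differ by at most `(4√5·Lβ/(bε))·√(1 + β⁴/ε²)`, which is `O(1/b)`. -/
theorem lgi_one_sample_stability
    (k : ℕ) (hk : 1 ≤ k) (ε β L : ℝ) (hε : 0 < ε) (hβ : 0 ≤ β) (hL : 0 < L)
    (b : ℕ) (hb : 1 ≤ b) (a a' : Fin k → ℝ)
    (ha : ∀ i, |a i| ≤ β) (ha' : ∀ i, |a' i| ≤ β)
    (hdiff : ∀ i, |a i - a' i| ≤ 2 * L / b) :
    let mean : (Fin k → ℝ) → ℝ := fun D => ((1 : ℝ) / k) * ∑ i, D i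
    let varD : (Fin k → ℝ) → ℝ := fun D => ((1 : ℝ) / k) * ∑ i, (D i - mean D) ^ 2
    let ρ : (Fin k → ℝ) → ℝ :=
      fun D => varD D / (((1 : ℝ) / k) * ∑ i, (D i) ^ 2 + ε)
    |ρ a - ρ a'| ≤
      (4 * Real.sqrt 5 * L * β / (b * ε)) * Real.sqrt (1 + β ^ 4 / ε ^ 2) := by
  intro mean varD ρ
  have hk0 : (0 : ℝ) < k := by exact_mod_cast Nat.lt_of_lt_of_le Nat.zero_lt_one hk
  have hb0 : (0 : ℝ) < b := by exact_mod_cast Nat.lt_of_lt_of_le Nat.zero_lt_one hb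
  set E : (Fin k → ℝ) → ℝ := fun D => ((1 : ℝ) / k) * ∑ i, (D i) ^ 2 with hE
  -- variance identity
  have hvar : ∀ D : Fin k → ℝ, varD D = E D - (mean D) ^ 2 := by
    intro D
    have hsum : ∑ i, D i = (k : ℝ) * mean D := by
      simp only [mean]; field_simp
    have hexp : ∑ i, (D i - mean D) ^ 2
        = ∑ i, (D i) ^ 2 - 2 * mean D * ∑ i, D i + (k : ℝ) * (mean D) ^ 2 := by
      rw [Finset.mul_sum]
      rw [show (k : ℝ) * (mean D) ^ 2 = ∑ _i : Fin k, (mean D) ^ 2 by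
        simp [mul_comm]]
      rw [← Finset.sum_sub_distrib, ← Finset.sum_add_distrib]
      exact Finset.sum_congr rfl fun i _ => by ring
    simp only [varD, E, hexp, hsum]
    field_simp
    ring
  -- basic bounds
  have hEa0 : 0 ≤ E a := by simp only [E]; positivity
  have hEa'0 : 0 ≤ E a' := by simp only [E]; positivity
  have hma : |mean a| ≤ β := lgi_mean_abs_le k hk a β ha
  have hma' : |mean a'| ≤ β := lgi_mean_abs_le k hk a' β ha'
  have hmd : |mean a - mean a'| ≤ 2 * L / b := by
    have : mean a - mean a' = ((1 : ℝ) / k) * ∑ i, (a i - a' i) := by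
      simp only [mean, Finset.sum_sub_distrib]; ring
    rw [this]
    exact lgi_mean_abs_le k hk _ _ hdiff
  have hEd : |E a - E a'| ≤ 4 * L * β / b := by
    have : E a - E a' = ((1 : ℝ) / k) * ∑ i, ((a i) ^ 2 - (a' i) ^ 2) := by
      simp only [E, Finset.sum_sub_distrib]; ring
    rw [this]
    apply lgi_mean_abs_le k hk
    intro i
    have : (a i) ^ 2 - (a' i) ^ 2 = (a i - a' i) * (a i + a' i) := by ring
    rw [this, abs_mul]
    have h1 : |a i + a' i| ≤ 2 * β := by
      calc |a i + a' i| ≤ |a i| + |a' i| := abs_add_le _ _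
      _ ≤ 2 * β := by linarith [ha i, ha' i]
    calc |a i - a' i| * |a i + a' i| ≤ (2 * L / b) * (2 * β) := by
          apply mul_le_mul (hdiff i) h1 (abs_nonneg _)
          positivity
      _ = 4 * L * β / b := by ring
  have hm2d : |(mean a) ^ 2 - (mean a') ^ 2| ≤ 4 * L * β / b := by
    have heq : (mean a) ^ 2 - (mean a') ^ 2 = (mean a - mean a') * (mean a + mean a') := by
      ring
    rw [heq, abs_mul]
    have h1 : |mean a + mean a'| ≤ 2 * β := by
      calc |mean a + mean a'| ≤ |mean a| + |mean a'| := abs_add_le _ _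
      _ ≤ 2 * β := by linarith
    calc |mean a - mean a'| * |mean a + mean a'| ≤ (2 * L / b) * (2 * β) := by
          apply mul_le_mul hmd h1 (abs_nonneg _); positivity
      _ = 4 * L * β / b := by ring
  have hVd : |varD a - varD a'| ≤ 8 * L * β / b := by
    rw [hvar a, hvar a']
    have : E a - (mean a) ^ 2 - (E a' - (mean a') ^ 2)
        = (E a - E a') - ((mean a) ^ 2 - (mean a') ^ 2) := by ring
    rw [this]
    calc |(E a - E a') - ((mean a) ^ 2 - (mean a') ^ 2)|
        ≤ |E a - E a'| + |(mean a) ^ 2 - (mean a') ^ 2| := abs_sub _ _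
      _ ≤ 4 * L * β / b + 4 * L * β / b := add_le_add hEd hm2d
      _ = 8 * L * β / b := by ring
  have hVa'0 : 0 ≤ varD a' := by simp only [varD]; positivity
  have hEa'β : E a' ≤ β ^ 2 := by
    have : |E a'| ≤ β ^ 2 := by
      apply lgi_mean_abs_le k hk
      intro i
      rw [abs_of_nonneg (sq_nonneg _)]
      rw [← sq_abs]
      exact pow_le_pow_left₀ (abs_nonneg _) (ha' i) 2
    exact (abs_le.mp this).2
  have hVa'β : varD a' ≤ β ^ 2 := by
    rw [hvar a']
    have := sq_nonneg (mean a')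
    linarith
  -- decomposition
  have hden1 : 0 < E a + ε := by linarith
  have hden2 : 0 < E a' + ε := by linarith
  have hρa : ρ a = varD a / (E a + ε) := rfl
  have hρa' : ρ a' = varD a' / (E a' + ε) := rfl
  rw [hρa, hρa', lgi_decomp (varD a) (varD a') (E a) (E a') ε hden1.ne' hden2.ne']
  have hterm1 : |(varD a - varD a') / (E a + ε)| ≤ (8 * L * β / b) / ε := by
    rw [abs_div, abs_of_pos hden1]
    exact div_le_div₀ (by positivity) hVd hε (by linarith)
  have hterm2 : |varD a' * (E a' - E a) / ((E a + ε) * (E a' + ε))|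
      ≤ β ^ 2 * (4 * L * β / b) / (ε * ε) := by
    rw [abs_div, abs_mul, abs_of_pos (mul_pos hden1 hden2)]
    have hnum : |varD a'| * |E a' - E a| ≤ β ^ 2 * (4 * L * β / b) := by
      apply mul_le_mul
      · rw [abs_of_nonneg hVa'0]; exact hVa'β
      · rw [abs_sub_comm]; exact hEd
      · exact abs_nonneg _
      · positivity
    exact div_le_div₀ (by positivity) hnum (by positivity)
      (mul_le_mul (by linarith) (by linarith) hε.le hden1.le)
  have habs : |(varD a - varD a') / (E a + ε)
        + varD a' * (E a' - E a) / ((E a + ε) * (E a' + ε))|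
      ≤ (8 * L * β / b) / ε + β ^ 2 * (4 * L * β / b) / (ε * ε) :=
    le_trans (abs_add_le _ _) (add_le_add hterm1 hterm2)
  refine le_trans habs ?_
  have hsc := lgi_scalar (β ^ 2 / ε) (by positivity)
  have hrw : (8 * L * β / b) / ε + β ^ 2 * (4 * L * β / b) / (ε * ε)
      = (4 * L * β / (b * ε)) * (2 + β ^ 2 / ε) := by
    field_simp
    ring
  have hrhs : (4 * Real.sqrt 5 * L * β / (b * ε)) * Real.sqrt (1 + β ^ 4 / ε ^ 2)
      = (4 * L * β / (b * ε)) * (Real.sqrt 5 * Real.sqrt (1 + (β ^ 2 / ε) ^ 2)) := by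
    rw [show (β ^ 2 / ε) ^ 2 = β ^ 4 / ε ^ 2 by rw [div_pow]; ring]
    ring
  rw [hrw, hrhs]
  exact mul_le_mul_of_nonneg_left hsc (by positivity)
end
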